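/- arXiv:2307.06668 — 2 statements merged into one kernel-verified Lean document; each statement's English description precedes it below -/
import Mathlib

section
/- Let (h_k), (x_k), (g_k) be sequences in a field with all h_k distinct. Define v_0(x)=1, v_k(x)=(x-x_0)(x-x_1)···(x-x_{k-1}) for k≥1, and define u_n(x)=∑_{k=0}^n c_{n,k} v_k(x) where c_{n,n}=1 and c_{n,k}=∏_{j=k}^{n-1} g_{j+1}/(h_n - h_j) for 0≤k<n. If L is the linear operator on polynomials determined by L v_n = h_n v_n + g_n v_{n-1} for n>0 and L v_0 = h_0 v_0, then L u_n = h_n u_n for all n≥0. -/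
open Polynomial Finset

/-- Verde-Star's construction: if `L` acts on the Newton basis `v_n` by
`L v_n = h_n v_n + g_n v_{n-1}` (and `L v_0 = h_0 v_0`), then the polynomials
`u_n = ∑ c_{n,k} v_k` are eigenfunctions: `L u_n = h_n u_n`. -/
theorem verdeStar_eigen {K : Type*} [Field K]
    (h x g : ℕ → K) (hdist : ∀ i j : ℕ, i ≠ j → h i ≠ h j)
    (v : ℕ → Polynomial K) (hv : ∀ k, v k = ∏ j ∈ Finset.range k, (X - C (x j)))
    (c : ℕ → ℕ → K)
    (hc : ∀ n k, k ≤ n → c n k = ∏ j ∈ Finset.Ico k n, g (j + 1) / (h n - h j))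
    (u : ℕ → Polynomial K)
    (hu : ∀ n, u n = ∑ k ∈ Finset.range (n + 1), C (c n k) * v k)
    (L : Polynomial K →ₗ[K] Polynomial K)
    (hL0 : L (v 0) = C (h 0) * v 0)
    (hL : ∀ n : ℕ, 0 < n → L (v n) = C (h n) * v n + C (g n) * v (n - 1)) :
    ∀ n : ℕ, L (u n) = C (h n) * u n := by
  intro n
  have hne : ∀ k, k < n → h n - h k ≠ 0 := fun k hk =>
    sub_ne_zero.mpr (hdist n k (Nat.ne_of_gt hk))
  have key : ∀ k, k < n → c n (k + 1) * g (k + 1) = c n k * (h n - h k) := by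
    intro k hk
    have h1 : c n k = g (k + 1) / (h n - h k) * c n (k + 1) := by
      rw [hc n k hk.le, hc n (k + 1) hk]
      exact Finset.prod_eq_prod_Ico_succ_bot hk _
    rw [h1]
    field_simp [hne k hk]
  have step1 : L (u n) = ∑ k ∈ Finset.range (n + 1), C (c n k) * L (v k) := by
    rw [hu, map_sum]
    refine Finset.sum_congr rfl fun k _ => ?_
    rw [← smul_eq_C_mul, ← smul_eq_C_mul, map_smul]
  have step2 : ∑ k ∈ Finset.range (n + 1), C (c n k) * L (v k)
      = (∑ k ∈ Finset.range (n + 1), C (c n k * h k) * v k)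
        + ∑ k ∈ Finset.range n, C (c n (k + 1) * g (k + 1)) * v k := by
    rw [Finset.sum_range_succ' (fun k => C (c n k) * L (v k)),
        Finset.sum_range_succ' (fun k => C (c n k * h k) * v k), hL0]
    have : ∀ k ∈ Finset.range n, C (c n (k + 1)) * L (v (k + 1))
        = C (c n (k + 1) * h (k + 1)) * v (k + 1)
          + C (c n (k + 1) * g (k + 1)) * v k := by
      intro k _
      rw [hL (k + 1) (Nat.succ_pos k)]
      simp only [Nat.add_sub_cancel, C_mul]
      ring
    rw [Finset.sum_congr rfl this, Finset.sum_add_distrib, C_mul]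
    ring
  have step3 : ∑ k ∈ Finset.range n, C (c n (k + 1) * g (k + 1)) * v k
      = ∑ k ∈ Finset.range (n + 1), C (c n k * (h n - h k)) * v k := by
    rw [Finset.sum_range_succ]
    simp only [sub_self, mul_zero, map_zero, zero_mul, add_zero]
    exact Finset.sum_congr rfl fun k hk => by
      rw [key k (Finset.mem_range.mp hk)]
  rw [step1, step2, step3, hu, Finset.mul_sum, ← Finset.sum_add_distrib]
  refine Finset.sum_congr rfl fun k _ => ?_
  simp only [C_mul, C_sub]
  ring
end

section
/- Suppose h_k = a_0 + a_1 k + a_2 k², x_k = b_0 + b_1 k + b_2 k², and g_k = x_{k-1}(h_k - h_0) + d_k where d_k satisfies d_{k+3} - d_k = 3(d_{k+2} - d_{k+1}) and d_0 = 0. Then g satisfies the fifth-order difference equation g_{k+5} - g_k = 5(g_{k+4} - g_{k+1}) - 10(g_{k+3} - g_{k+2}) with g_0 = 0. -/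
/-!
The recurrence `g (k + 5) - g k = 5 (g (k + 4) - g (k + 1)) - 10 (g (k + 3) - g (k + 2))` says
`Δ⁵ g = 0`, and that for `d` says `Δ³ d = 0`. Since `k ↦ x (k - 1) (h k - h 0)` is a polynomial
of degree at most `4` in `k`, it is also annihilated by `Δ⁵`, hence so is `g`.
-/

open Finset Polynomial
open scoped fwdDiff

section

variable {R : Type*} [Ring R]

lemma fwdDiff_iter_three_apply (f : ℤ → R) (k : ℤ) :
    Δ_[1] ^[3] f k = f (k + 3) - 3 * f (k + 2) + 3 * f (k + 1) - f k := by
  simp [fwdDiff_iter_eq_sum_shift, sum_range_succ, Nat.choose]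
  noncomm_ring

lemma fwdDiff_iter_five_apply (f : ℤ → R) (k : ℤ) :
    Δ_[1] ^[5] f k =
      f (k + 5) - 5 * f (k + 4) + 10 * f (k + 3) - 10 * f (k + 2) + 5 * f (k + 1) - f k := by
  simp [fwdDiff_iter_eq_sum_shift, sum_range_succ, Nat.choose]
  noncomm_ring

lemma fwdDiff_iter_comp_intCast {G : Type*} [AddCommGroup G] (f : R → G) (n : ℕ) (k : ℤ) :
    Δ_[1] ^[n] (fun j : ℤ ↦ f j) k = Δ_[1] ^[n] f k := by
  simp [fwdDiff_iter_eq_sum_shift]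

end

lemma fwdDiff_iter_eq_zero_of_le {M G : Type*} [AddCommMonoid M] [AddCommGroup G] {a : M}
    {f : M → G} {m n : ℕ} (hmn : m ≤ n) (hf : Δ_[a] ^[m] f = 0) : Δ_[a] ^[n] f = 0 := by
  obtain ⟨j, rfl⟩ := Nat.exists_eq_add_of_le hmn
  rw [add_comm, Function.iterate_add_apply, hf]
  exact Function.iterate_fixed (fwdDiff_const a 0) j

lemma Polynomial.fwdDiff_iter_eval_intCast_eq_zero_of_natDegree_lt {R : Type*} [CommRing R]
    {P : R[X]} {n : ℕ} (hP : P.natDegree < n) : Δ_[1] ^[n] (fun k : ℤ ↦ P.eval (k : R)) = 0 := by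
  ext k
  rw [fwdDiff_iter_comp_intCast (fun r ↦ P.eval r), fwdDiff_iter_eq_zero_of_degree_lt hP]
  rfl

theorem g_satisfies_fifth_order_general {K : Type*} [Field K]
    (a₀ a₁ a₂ b₀ b₁ b₂ : K) (h x g d : ℤ → K)
    (hh : ∀ k : ℤ, h k = a₀ + a₁ * (k : K) + a₂ * (k : K) ^ 2)
    (hx : ∀ k : ℤ, x k = b₀ + b₁ * (k : K) + b₂ * (k : K) ^ 2)
    (hd : ∀ k : ℤ, d (k + 3) - d k = 3 * (d (k + 2) - d (k + 1)))
    (hd0 : d 0 = 0)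
    (hg : ∀ k : ℤ, g k = x (k - 1) * (h k - h 0) + d k) :
    g 0 = 0 ∧
      ∀ k : ℤ, g (k + 5) - g k =
        5 * (g (k + 4) - g (k + 1)) - 10 * (g (k + 3) - g (k + 2)) := by
  set P : K[X] := (C b₀ + C b₁ * (X - 1) + C b₂ * (X - 1) ^ 2) * (C a₁ * X + C a₂ * X ^ 2)
    with hPdef
  have hP : P.natDegree < 5 := Nat.lt_succ_of_le (by rw [hPdef]; compute_degree!)
  have hgP : g = (fun k : ℤ ↦ P.eval (k : K)) + d := by
    ext k
    simp only [Pi.add_apply, hg, hh, hx, P, eval_mul, eval_add, eval_sub, eval_pow, eval_C,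
      eval_X, eval_one]
    push_cast
    ring
  have hd3 : Δ_[1] ^[3] d = 0 := funext fun k ↦ by
    rw [fwdDiff_iter_three_apply, Pi.zero_apply]
    linear_combination hd k
  have hg5 : Δ_[1] ^[5] g = 0 := by
    rw [hgP, fwdDiff_iter_add, P.fwdDiff_iter_eval_intCast_eq_zero_of_natDegree_lt hP,
      fwdDiff_iter_eq_zero_of_le (by norm_num) hd3, add_zero]
  refine ⟨by simp [hg, hd0], fun k ↦ ?_⟩
  have hg5k := congrFun hg5 k
  rw [fwdDiff_iter_five_apply, Pi.zero_apply] at hg5k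
  linear_combination hg5k

/-- If `h` and `x` are quadratic sequences and `g_k = x_{k-1}(h_k - h_0) + d_k` where
`d` satisfies the third-order difference equation with `d_0 = 0`, then `g` satisfies the
fifth-order difference equation with `g_0 = 0`. -/
theorem g_satisfies_fifth_order {K : Type*} [Field K] [CharZero K]
    (a₀ a₁ a₂ b₀ b₁ b₂ : K) (h x g d : ℤ → K)
    (hh : ∀ k : ℤ, h k = a₀ + a₁ * (k : K) + a₂ * (k : K) ^ 2)
    (hx : ∀ k : ℤ, x k = b₀ + b₁ * (k : K) + b₂ * (k : K) ^ 2)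
    (hd : ∀ k : ℤ, d (k + 3) - d k = 3 * (d (k + 2) - d (k + 1)))
    (hd0 : d 0 = 0)
    (hg : ∀ k : ℤ, g k = x (k - 1) * (h k - h 0) + d k) :
    g 0 = 0 ∧
      ∀ k : ℤ, g (k + 5) - g k =
        5 * (g (k + 4) - g (k + 1)) - 10 * (g (k + 3) - g (k + 2)) :=
  g_satisfies_fifth_order_general a₀ a₁ a₂ b₀ b₁ b₂ h x g d hh hx hd hd0 hg
end
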